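/- Let n ≥ 1 and let q₀^{(0)},…,q₀^{(n−1)}, q₁^{(0)},…,q₁^{(n−1)} be positive real numbers. Define β₀ = 1 and β_i = β_{i−1} q₀^{(i)} + ∏_{j=0}^{i−1} q₁^{(j)} for 1 ≤ i ≤ n−1, and for 1 ≤ k ≤ n set a_k = (∏_{i=0}^{k−1} q₀^{(i)}) · (∏_{j=k−1}^{n−1} q₁^{(j)}). Then (∏_{i=1}^{n} a_i) / (Σ_{j=1}^{n} ∏_{1≤i≤n, i≠j} a_i) = (∏_{i=0}^{n−1} q₀^{(i)} q₁^{(i)}) / β_{n−1}. (This identity expresses the geometric lifting of the Schensted insertion of two blocks in terms of the conserved quantities β.) -/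

import Mathlib

/-- `betaRec q0 q1 i = β_i`: `β_0 = 1`, `β_i = β_{i-1} q0^{(i)} + ∏_{j<i} q1^{(j)}`. -/
noncomputable def betaRec (q0 q1 : ℕ → ℝ) : ℕ → ℝ
  | 0 => 1
  | i + 1 => betaRec q0 q1 i * q0 (i + 1) + ∏ j ∈ Finset.range (i + 1), q1 j

lemma beta_eq_sum (q0 q1 : ℕ → ℝ) (m : ℕ) :
    ∑ j ∈ Finset.Icc 1 (m + 1), (∏ i ∈ Finset.Ico j (m + 1), q0 i) *
      ∏ i ∈ Finset.range (j - 1), q1 i = betaRec q0 q1 m := by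
  induction m with
  | zero => simp [betaRec]
  | succ m ih =>
    rw [Finset.sum_Icc_succ_top (by omega : 1 ≤ m + 1 + 1)]
    have h : ∀ j ∈ Finset.Icc 1 (m + 1),
        (∏ i ∈ Finset.Ico j (m + 1 + 1), q0 i) * ∏ i ∈ Finset.range (j - 1), q1 i
          = ((∏ i ∈ Finset.Ico j (m + 1), q0 i) * ∏ i ∈ Finset.range (j - 1), q1 i)
            * q0 (m + 1) := by
      intro j hj
      rw [Finset.prod_Ico_succ_top (Finset.mem_Icc.mp hj).2]
      ring
    rw [Finset.sum_congr rfl h, ← Finset.sum_mul, ih]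
    simp [betaRec]

/-- the geometric lifting of the Schensted insertion of two blocks:
`(∏_{i=1}^n a_i)/(∑_{j=1}^n ∏_{i≠j} a_i) = (∏_{i<n} q0^{(i)} q1^{(i)})/β_{n-1}`,
where `a_k = (∏_{i<k} q0^{(i)})(∏_{j=k-1}^{n-1} q1^{(j)})`. -/
theorem stmt_12 (n : ℕ) (hn : 1 ≤ n) (q0 q1 : ℕ → ℝ)
    (hq0 : ∀ j < n, 0 < q0 j) (hq1 : ∀ j < n, 0 < q1 j) :
    let a : ℕ → ℝ := fun k =>
      (∏ i ∈ Finset.range k, q0 i) * ∏ j ∈ Finset.Ico (k - 1) n, q1 j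
    (∏ i ∈ Finset.Icc 1 n, a i) /
        (∑ j ∈ Finset.Icc 1 n, ∏ i ∈ (Finset.Icc 1 n).erase j, a i)
      = (∏ i ∈ Finset.range n, q0 i * q1 i) / betaRec q0 q1 (n - 1) := by
  intro a
  have hn1 : n - 1 + 1 = n := by omega
  have hbeta : betaRec q0 q1 (n - 1)
      = ∑ j ∈ Finset.Icc 1 n, (∏ i ∈ Finset.Ico j n, q0 i) *
          ∏ i ∈ Finset.range (j - 1), q1 i := by
    rw [← beta_eq_sum q0 q1 (n - 1), hn1]
  set P := ∏ i ∈ Finset.range n, q0 i * q1 i with hP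
  have hPsplit : P = (∏ i ∈ Finset.range n, q0 i) * ∏ i ∈ Finset.range n, q1 i :=
    Finset.prod_mul_distrib
  have hPpos : 0 < P := Finset.prod_pos fun i hi =>
    mul_pos (hq0 i (Finset.mem_range.mp hi)) (hq1 i (Finset.mem_range.mp hi))
  have hapos : ∀ j ∈ Finset.Icc 1 n, 0 < a j := by
    intro j hj
    obtain ⟨h1, h2⟩ := Finset.mem_Icc.mp hj
    exact mul_pos
      (Finset.prod_pos fun i hi => hq0 i (by have := Finset.mem_range.mp hi; omega))
      (Finset.prod_pos fun i hi => hq1 i (Finset.mem_Ico.mp hi).2)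
  have hnum : ∀ j ∈ Finset.Icc 1 n,
      a j * ((∏ i ∈ Finset.Ico j n, q0 i) * ∏ i ∈ Finset.range (j - 1), q1 i) = P := by
    intro j hj
    obtain ⟨h1, h2⟩ := Finset.mem_Icc.mp hj
    show (∏ i ∈ Finset.range j, q0 i) * (∏ i ∈ Finset.Ico (j - 1) n, q1 i) * _ = P
    rw [hPsplit,
      ← Finset.prod_range_mul_prod_Ico q0 h2,
      ← Finset.prod_range_mul_prod_Ico q1 (by omega : j - 1 ≤ n)]
    ring
  have herase : ∀ j ∈ Finset.Icc 1 n,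
      ∏ i ∈ (Finset.Icc 1 n).erase j, a i
        = (∏ i ∈ Finset.Icc 1 n, a i) *
            ((∏ i ∈ Finset.Ico j n, q0 i) * ∏ i ∈ Finset.range (j - 1), q1 i) / P := by
    intro j hj
    rw [eq_div_iff hPpos.ne', ← hnum j hj, ← mul_assoc, Finset.prod_erase_mul _ _ hj]
  have hsum : ∑ j ∈ Finset.Icc 1 n, ∏ i ∈ (Finset.Icc 1 n).erase j, a i
      = (∏ i ∈ Finset.Icc 1 n, a i) * betaRec q0 q1 (n - 1) / P := by
    rw [Finset.sum_congr rfl herase, hbeta, Finset.mul_sum, Finset.sum_div]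
  have hprodpos : 0 < ∏ i ∈ Finset.Icc 1 n, a i := Finset.prod_pos hapos
  have hbpos : 0 < betaRec q0 q1 (n - 1) := by
    rw [hbeta]
    refine Finset.sum_pos (fun j hj => ?_) ⟨1, Finset.mem_Icc.mpr ⟨le_refl 1, hn⟩⟩
    obtain ⟨h1, h2⟩ := Finset.mem_Icc.mp hj
    exact mul_pos
      (Finset.prod_pos fun i hi => hq0 i (Finset.mem_Ico.mp hi).2)
      (Finset.prod_pos fun i hi => hq1 i (by have := Finset.mem_range.mp hi; omega))
  rw [hsum]
  field_simp
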